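/- For every p ∈ ℚ∞ with c(p) > 2, at least one of the three values c(μ_L(p)), c(μ_D(p)), c(μ_U(p)) is strictly smaller than c(p). -/

import Mathlib

open Matrix

abbrev V6 := Fin 6 → ℤ

def C6 : Matrix (Fin 6) (Fin 6) ℤ :=
  !![1,0,-1,-1,1,1;
     0,1,-1,-1,1,1;
     0,0,1,0,-1,-1;
     0,0,0,1,-1,-1;
     0,0,0,0,1,0;
     0,0,0,0,0,1]

/-- The bilinear form `⟨x,y⟩ = xᵀ C y` on `ℤ^6`. -/
def form (x y : V6) : ℤ := x ⬝ᵥ C6.mulVec y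

/-- The quaternion `i`. -/
def qI : Quaternion ℤ := ⟨0,1,0,0⟩
/-- The quaternion `j`. -/
def qJ : Quaternion ℤ := ⟨0,0,1,0⟩
/-- The quaternion `k`. -/
def qK : Quaternion ℤ := ⟨0,0,0,1⟩

instance : DecidableEq (Quaternion ℤ) := fun x y =>
  decidable_of_iff (x.re = y.re ∧ x.imI = y.imI ∧ x.imJ = y.imJ ∧ x.imK = y.imK)
    ⟨fun ⟨h1, h2, h3, h4⟩ => QuaternionAlgebra.ext h1 h2 h3 h4,
     fun h => by subst h; exact ⟨rfl, rfl, rfl, rfl⟩⟩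

/-- The quaternion group `H = {±1, ±i, ±j, ±k}`. -/
def Hset : Finset (Quaternion ℤ) := {1, -1, qI, -qI, qJ, -qJ, qK, -qK}

/-- The subset `H⁺ = {1, i, j, k}`. -/
def Hplus : Finset (Quaternion ℤ) := {1, qI, qJ, qK}

/-- Index type for the three special slopes `0`, `1`, `∞`. -/
inductive Ty | zero | one | inf
deriving DecidableEq

def h0 : V6 := ![0,0,1,1,1,1]
def h1 : V6 := ![1,1,2,2,1,1]
def hinf : V6 := ![1,1,1,1,0,0]

def hTy : Ty → V6
  | .zero => h0
  | .one => h1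
  | .inf => hinf

/-- The vectors `v_t^x` for `t ∈ {0,1,∞}` and `x ∈ H⁺`. -/
def vposTy : Ty → Quaternion ℤ → V6
  | .zero, x => if x = 1 then ![0,0,1,0,1,0] else if x = qI then ![-1,0,0,0,0,0]
      else if x = qJ then ![0,0,1,0,0,1] else ![0,1,1,1,1,1]
  | .one, x => if x = 1 then ![1,0,1,1,1,0] else if x = qI then ![0,1,1,1,1,0]
      else if x = qJ then ![0,0,1,0,0,0] else ![1,1,2,1,1,1]
  | .inf, x => if x = 1 then ![1,0,0,1,0,0] else if x = qI then ![1,1,1,1,1,0]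
      else if x = qJ then ![0,0,0,0,0,-1] else ![1,0,1,0,0,0]

/-- The vectors `v_t^x` for `t ∈ {0,1,∞}` and `x ∈ H`, with `v_t^{-x} = h_t - v_t^x`. -/
def vTy (t : Ty) (x : Quaternion ℤ) : V6 :=
  if x ∈ Hplus then vposTy t x else hTy t - vposTy t (-x)

/-- `a(q)`: numerator, with `a(∞) = 1`. -/
def aQ : WithTop ℚ → ℤ := WithTop.recTopCoe 1 Rat.num

/-- `b(q)`: denominator, with `b(∞) = 0`. -/
def bQ : WithTop ℚ → ℤ := WithTop.recTopCoe 0 (fun x => (x.den : ℤ))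

/-- The type `t(q) ∈ {0,1,∞}` of a slope `q`. -/
def tyQ (q : WithTop ℚ) : Ty :=
  if aQ q % 2 = 0 then Ty.zero else if bQ q % 2 = 1 then Ty.one else Ty.inf

/-- `⌊n⌋₂ = n/2` for even `n` and `(n-1)/2` for odd `n`. -/
def half2 (n : ℤ) : ℤ := if Even n then n / 2 else (n - 1) / 2

/-- `h_q = b(q)·h₀ + a(q)·h_∞`. -/
def hQ (q : WithTop ℚ) : V6 := bQ q • h0 + aQ q • hinf

/-- `v_q^x = v_{t(q)}^x + ⌊b(q)⌋₂·h₀ + ⌊a(q)⌋₂·h_∞`. -/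
def vQ (q : WithTop ℚ) (x : Quaternion ℤ) : V6 :=
  vTy (tyQ q) x + half2 (bQ q) • h0 + half2 (aQ q) • hinf

/-- `rk e = ⟨e, h_∞⟩`. -/
def rk (e : V6) : ℤ := form e hinf

/-- `deg e = ⟨h₀, e⟩`. -/
def degV (e : V6) : ℤ := form h0 e

/-- `e` is positive if `rk e > 0`, or `rk e = 0` and `deg e > 0`. -/
def PosV (e : V6) : Prop := 0 < rk e ∨ (rk e = 0 ∧ 0 < degV e)

/-- `d(p,q) = |a(q)b(p) - a(p)b(q)|`. -/
def dQ (p q : WithTop ℚ) : ℤ := |aQ q * bQ p - aQ p * bQ q|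

/-- Complexity `c(p) = |a(p)| + |b(p)| + |a(p)+b(p)|`. -/
def cpx (p : WithTop ℚ) : ℤ := |aQ p| + |bQ p| + |aQ p + bQ p|


/-- The element of `ℚ∞` given by the normalization of an integer pair `(a,b)` with `b ≥ 0`
after negating both entries if `b < 0`; the pair `(±1, 0)` normalizes to `∞`. -/
def mkQ (a b : ℤ) : WithTop ℚ :=
  if b = 0 then ⊤ else (((a : ℚ) / (b : ℚ) : ℚ) : WithTop ℚ)

/-- The unfolding map `μ_L(p) = -p`, given in coprime coordinates by `(-a(p), b(p))`. -/
def muL (p : WithTop ℚ) : WithTop ℚ := mkQ (-aQ p) (bQ p)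

/-- The unfolding map `μ_D(p) = -p/(2p+1)`, given by `(-a(p), 2a(p)+b(p))`. -/
def muDq (p : WithTop ℚ) : WithTop ℚ := mkQ (-aQ p) (2 * aQ p + bQ p)

/-- The unfolding map `μ_U(p) = -2-p`, given by `(-a(p)-2b(p), b(p))`. -/
def muU (p : WithTop ℚ) : WithTop ℚ := mkQ (-aQ p - 2 * bQ p) (bQ p)

/-!
Write `p = a/b` in coprime coordinates. Each unfolding map sends a coprime pair to a coprime
pair, so the complexity of its image is given by the same formula `|a| + |b| + |a + b|`, which
equals `2 max(|a|, |b|, |a + b|)`. When `b > 0`, `a ≠ 0` and `a + b ≠ 0`, this maximum drops under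
`μ_L` if `a > 0`, under `μ_U` if `a + b < 0` and under `μ_D` if `a < 0 < a + b`. In the remaining
cases coprimality forces the complexity to be `2`.
-/

lemma isCoprime_aQ_bQ (p : WithTop ℚ) : IsCoprime (aQ p) (bQ p) := by
  induction p using WithTop.recTopCoe with
  | top => exact isCoprime_one_left
  | coe q => exact Int.isCoprime_iff_nat_coprime.mpr q.reduced

lemma bQ_nonneg (p : WithTop ℚ) : 0 ≤ bQ p := by
  induction p using WithTop.recTopCoe with
  | top => exact le_rfl
  | coe q => exact Int.natCast_nonneg q.den

lemma mkQ_neg_neg (a b : ℤ) : mkQ (-a) (-b) = mkQ a b := by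
  simp only [mkQ, neg_eq_zero, Int.cast_neg, neg_div_neg_eq]

lemma cpx_mkQ_of_pos {a b : ℤ} (hab : IsCoprime a b) (hb : 0 < b) :
    cpx (mkQ a b) = |a| + |b| + |a + b| := by
  have hcop := Int.isCoprime_iff_nat_coprime.mp hab
  rw [mkQ, if_neg hb.ne', cpx, aQ, bQ, WithTop.recTopCoe_coe, WithTop.recTopCoe_coe,
    Rat.num_div_eq_of_coprime hb hcop, Rat.den_div_eq_of_coprime hb hcop]

lemma cpx_mkQ {a b : ℤ} (hab : IsCoprime a b) : cpx (mkQ a b) = |a| + |b| + |a + b| := by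
  rcases lt_trichotomy b 0 with hb | rfl | hb
  · rw [← mkQ_neg_neg, cpx_mkQ_of_pos hab.neg_neg (neg_pos.mpr hb), ← neg_add, abs_neg,
      abs_neg, abs_neg]
  · have ha : |a| = 1 := Int.isUnit_iff_abs_eq.mp (isCoprime_zero_right.mp hab)
    simp only [mkQ, if_true, abs_zero, add_zero, ha]
    rfl
  · exact cpx_mkQ_of_pos hab hb

lemma ne_zero_of_isCoprime_of_two_lt {a b : ℤ} (hab : IsCoprime a b)
    (h : 2 < |a| + |b| + |a + b|) : a ≠ 0 ∧ b ≠ 0 ∧ a + b ≠ 0 := by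
  refine ⟨?_, ?_, ?_⟩ <;> intro h0
  · rw [h0, isCoprime_zero_left, Int.isUnit_iff_abs_eq] at hab
    rw [h0, zero_add, abs_zero, hab] at h
    omega
  · rw [h0, isCoprime_zero_right, Int.isUnit_iff_abs_eq] at hab
    rw [h0, add_zero, abs_zero, hab] at h
    omega
  · rw [← neg_eq_of_add_eq_zero_right h0, IsCoprime.neg_right_iff, isCoprime_self,
      Int.isUnit_iff_abs_eq] at hab
    rw [h0, ← neg_eq_of_add_eq_zero_right h0, abs_neg, abs_zero, hab] at h
    omega

lemma unfolding_complexity_lt_of_ne_zero {a b : ℤ} (ha : a ≠ 0) (hb : 0 < b) (hab : a + b ≠ 0) :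
    |-a| + |b| + |-a + b| < |a| + |b| + |a + b| ∨
      |-a| + |2 * a + b| + |-a + (2 * a + b)| < |a| + |b| + |a + b| ∨
      |-a - 2 * b| + |b| + |-a - 2 * b + b| < |a| + |b| + |a + b| := by
  simp only [abs_eq_max_neg]
  omega

theorem stmt19 (p : WithTop ℚ) (h : 2 < cpx p) :
    cpx (muL p) < cpx p ∨ cpx (muDq p) < cpx p ∨ cpx (muU p) < cpx p := by
  set a := aQ p
  set b := bQ p
  have hab : IsCoprime a b := isCoprime_aQ_bQ p
  have hD : IsCoprime (-a) (2 * a + b) := by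
    have h' := hab.neg_left.add_mul_left_right (-2)
    rwa [show b + -a * -2 = 2 * a + b by ring] at h'
  have hU : IsCoprime (-a - 2 * b) b := by
    have h' := hab.neg_left.add_mul_right_left (-2)
    rwa [neg_mul, ← sub_eq_add_neg] at h'
  obtain ⟨ha, hb, hab0⟩ := ne_zero_of_isCoprime_of_two_lt hab h
  rw [muL, muDq, muU, cpx_mkQ hab.neg_left, cpx_mkQ hD, cpx_mkQ hU]
  exact unfolding_complexity_lt_of_ne_zero ha (lt_of_le_of_ne (bQ_nonneg p) hb.symm) hab0
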